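/- Fix integers n ≥ 1 and 0 < v_1 < v_2 < ⋯ < v_n < v_{n+1} = N. Let d be a degree vector that is aligned and not identically zero. Then for every 1 ≤ i ≤ n, every integer 0 ≤ ℓ ≤ v_{i+1} − v_i, and every 1 ≤ j ≤ v_i, D(d) < − F_ℓ(d^{i+1}) + (v_i − v_{i+1} + ℓ) · d^i_j, where F_ℓ(d^{i+1}) denotes the maximum of Σ_{k∈S} d^{i+1}_k over all subsets S ⊆ {1, …, v_{i+1}} of cardinality ℓ. -/

import Mathlib

/-!
Choose the alignment injections `f_i` and split the `r`-sum at level `i` into the matched indices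
`r = f_i(b)` and the unmatched ones. This writes `-D(d)` as a sum of nonnegative terms
`E_i + T_i`: `E_i` collects the differences `B(d^i_a - d^{i+1}_{f_i b}) - B(d^i_a - d^i_b)`,
and `T_i` the terms `B(d^i_a - d^{i+1}_r)` with `r` unmatched. The diagonal of `E_p` dominates
`Σ_{k ∈ S} (d^p_k - d^{p+1}_{f_p k})`, so following `S` up the chain of injections,
`Σ_{k ∈ S} d^p_k ≤ Σ_{q ≥ p} E_q`. Applied at level `i + 1` to a maximising `ℓ`-set together
with `v_{i+1} - v_i - ℓ` further unmatched indices, and combined with `B(m) ≥ m` inside `T_i`,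
this gives the non-strict bound. Strictness comes from the highest level `p` carrying a nonzero
entry: there `E_p ≥ 1` and `T_p ≥ 1`, and one of the two is not yet used.
-/

open Finset

/-- `Bb m = m(m+1)/2` for `m ≥ 0` and `Bb m = 0` for `m < 0`. -/
def Bb (m : ℤ) : ℤ := if 0 ≤ m then m * (m + 1) / 2 else 0

/-- The degree `D(d)` of the coefficient `J_d` of the twisted small `J`-function of
the abelianization of `Fl(v_1,…,v_n; N)`. -/
def degD (n : ℕ) (v : ℕ → ℕ) (d : ℕ → ℕ → ℕ) : ℤ :=
  ∑ i ∈ Icc 1 n,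
    ((∑ j ∈ Icc 1 (v i), ∑ k ∈ Icc 1 (v i), Bb ((d i j : ℤ) - (d i k : ℤ)))
      - ∑ j ∈ Icc 1 (v i), ∑ r ∈ Icc 1 (v (i + 1)),
          Bb ((d i j : ℤ) - (d (i + 1) r : ℤ)))

/-- A degree vector `d` is aligned if for every `1 ≤ i ≤ n` there is an injection
`f_i : {1,…,v_i} → {1,…,v_{i+1}}` with `d^i_j ≥ d^{i+1}_{f_i(j)}` for all `j`. -/
def Aligned (n : ℕ) (v : ℕ → ℕ) (d : ℕ → ℕ → ℕ) : Prop :=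
  ∀ i, 1 ≤ i → i ≤ n → ∃ f : ℕ → ℕ,
    Set.InjOn f (Set.Icc 1 (v i)) ∧
    ∀ j, 1 ≤ j → j ≤ v i → 1 ≤ f j ∧ f j ≤ v (i + 1) ∧ d (i + 1) (f j) ≤ d i j

lemma Bb_nonneg (m : ℤ) : 0 ≤ Bb m := by
  unfold Bb; split
  · exact Int.ediv_nonneg (by nlinarith) (by norm_num)
  · exact le_rfl

lemma self_le_Bb (m : ℤ) : m ≤ Bb m := by
  unfold Bb; split
  · rw [Int.le_ediv_iff_mul_le (by norm_num)]
    rcases (by omega : m = 0 ∨ 1 ≤ m) with h | h <;> nlinarith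
  · omega

lemma Bb_mono : Monotone Bb := by
  intro a b h
  unfold Bb; split_ifs with ha hb hb
  · exact Int.ediv_le_ediv (by norm_num) (by nlinarith)
  · omega
  · exact Int.ediv_nonneg (by nlinarith) (by norm_num)
  · exact le_rfl

@[simp] lemma Bb_zero : Bb 0 = 0 := by norm_num [Bb]

section Level

variable {ι κ : Type*}

def sumBb (A : Finset ι) (C : Finset κ) (x : ι → ℤ) (y : κ → ℤ) : ℤ :=
  ∑ a ∈ A, ∑ r ∈ C, Bb (x a - y r)

def alignExcess (A : Finset ι) (x : ι → ℤ) (y : κ → ℤ) (f : ι → κ) : ℤ :=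
  ∑ a ∈ A, ∑ b ∈ A, (Bb (x a - y (f b)) - Bb (x a - x b))

structure IsAlignedMap (A : Finset ι) (B : Finset κ) (x : ι → ℤ) (y : κ → ℤ) (f : ι → κ) :
    Prop where
  injOn : Set.InjOn f A
  mapsTo : Set.MapsTo f A B
  le : ∀ a ∈ A, y (f a) ≤ x a

variable {A : Finset ι} {B C U : Finset κ} {x : ι → ℤ} {y : κ → ℤ} {f : ι → κ}

lemma sumBb_nonneg : 0 ≤ sumBb A C x y :=
  sum_nonneg fun _ _ => sum_nonneg fun _ _ => Bb_nonneg _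

lemma sum_sub_le_sumBb {a : ι} (ha : a ∈ A) (hU : U ⊆ C) :
    ∑ r ∈ U, (x a - y r) ≤ sumBb A C x y :=
  calc ∑ r ∈ U, (x a - y r)
      ≤ ∑ r ∈ C, Bb (x a - y r) :=
        (sum_le_sum fun _ _ => self_le_Bb _).trans
          (sum_le_sum_of_subset_of_nonneg hU fun _ _ _ => Bb_nonneg _)
    _ ≤ sumBb A C x y :=
        single_le_sum (f := fun a => ∑ r ∈ C, Bb (x a - y r))
          (fun _ _ => sum_nonneg fun _ _ => Bb_nonneg _) ha

lemma sumBb_self_sub_sumBb [DecidableEq κ] (hinj : Set.InjOn f A) (hmaps : Set.MapsTo f A B) :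
    sumBb A A x x - sumBb A B x y = -(alignExcess A x y f + sumBb A (B \ A.image f) x y) := by
  have hsplit : ∀ a, ∑ r ∈ B, Bb (x a - y r)
      = ∑ b ∈ A, Bb (x a - y (f b)) + ∑ r ∈ B \ A.image f, Bb (x a - y r) := fun a => by
    rw [← sum_sdiff (image_subset_iff.2 hmaps), sum_image hinj, add_comm]
  simp only [sumBb, alignExcess, hsplit, sum_add_distrib, sum_sub_distrib]
  ring

lemma card_sdiff_image [DecidableEq κ] (hinj : Set.InjOn f A) (hmaps : Set.MapsTo f A B) :
    (B \ A.image f).card = B.card - A.card := by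
  rw [card_sdiff_of_subset (image_subset_iff.2 hmaps), card_image_of_injOn hinj]

namespace IsAlignedMap

variable (h : IsAlignedMap A B x y f)
include h

lemma excess_term_nonneg (a : ι) {b : ι} (hb : b ∈ A) :
    0 ≤ Bb (x a - y (f b)) - Bb (x a - x b) :=
  sub_nonneg.2 (Bb_mono (by linarith [h.le b hb]))

lemma sum_sub_le_alignExcess {S : Finset ι} (hS : S ⊆ A) :
    ∑ k ∈ S, (x k - y (f k)) ≤ alignExcess A x y f :=
  calc ∑ k ∈ S, (x k - y (f k))
      ≤ ∑ k ∈ S, (Bb (x k - y (f k)) - Bb (x k - x k)) :=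
        sum_le_sum fun k _ => by simpa using self_le_Bb (x k - y (f k))
    _ ≤ ∑ k ∈ S, ∑ b ∈ A, (Bb (x k - y (f b)) - Bb (x k - x b)) :=
        sum_le_sum fun k hk => single_le_sum (fun _ hb => h.excess_term_nonneg k hb) (hS hk)
    _ ≤ alignExcess A x y f :=
        sum_le_sum_of_subset_of_nonneg hS fun a _ _ =>
          sum_nonneg fun _ hb => h.excess_term_nonneg a hb

lemma alignExcess_nonneg : 0 ≤ alignExcess A x y f :=
  sum_nonneg fun a _ => sum_nonneg fun _ hb => h.excess_term_nonneg a hb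

end IsAlignedMap

end Level

lemma exists_subset_disjoint_card_eq {α : Type*} [DecidableEq α] (S U : Finset α) :
    ∃ U' ⊆ U, Disjoint S U' ∧ U'.card = U.card - S.card := by
  obtain ⟨U', hU', hcard⟩ := exists_subset_card_eq (le_card_sdiff S U)
  exact ⟨U', hU'.trans sdiff_subset, disjoint_of_subset_right hU' disjoint_sdiff, hcard⟩

lemma sum_add_lt_sum_add_sum {ι : Type*} [DecidableEq ι] {s t : Finset ι} {E T : ι → ℤ}
    (ht : t ⊆ s) {i q : ι} (hi : i ∈ s) (hit : i ∉ t) (hq : q ∈ s)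
    (hE : ∀ k ∈ s, 0 ≤ E k) (hT : ∀ k ∈ s, 0 ≤ T k) (hEq : 0 < E q) (hTq : 0 < T q) :
    ∑ k ∈ t, E k + T i < ∑ k ∈ s, E k + ∑ k ∈ s, T k := by
  by_cases hqt : q ∈ t
  · have hqi : i ≠ q := fun h => hit (h ▸ hqt)
    have hpair : T i + T q ≤ ∑ k ∈ s, T k := by
      rw [← sum_pair hqi]
      exact sum_le_sum_of_subset_of_nonneg (by simp [insert_subset_iff, hi, hq])
        fun k hk _ => hT k hk
    linarith [sum_le_sum_of_subset_of_nonneg ht fun k hk _ => hE k hk]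
  · have hins : E q + ∑ k ∈ t, E k ≤ ∑ k ∈ s, E k := by
      rw [← sum_insert hqt]
      exact sum_le_sum_of_subset_of_nonneg (insert_subset hq ht) fun k hk _ => hE k hk
    linarith [single_le_sum hT hi]

section Flag

variable {n : ℕ} {v : ℕ → ℕ} {d : ℕ → ℕ → ℕ} {f : ℕ → ℕ → ℕ}

def row (d : ℕ → ℕ → ℕ) (i k : ℕ) : ℤ := d i k

def IsAlignment (n : ℕ) (v : ℕ → ℕ) (d : ℕ → ℕ → ℕ) (f : ℕ → ℕ → ℕ) : Prop :=
  ∀ i ∈ Icc 1 n, IsAlignedMap (Icc 1 (v i)) (Icc 1 (v (i + 1))) (row d i) (row d (i + 1)) (f i)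

lemma Aligned.exists_isAlignment (h : Aligned n v d) : ∃ f, IsAlignment n v d f := by
  have : ∀ i, ∃ g : ℕ → ℕ, i ∈ Icc 1 n →
      IsAlignedMap (Icc 1 (v i)) (Icc 1 (v (i + 1))) (row d i) (row d (i + 1)) g := by
    intro i
    by_cases hi : i ∈ Icc 1 n
    · obtain ⟨g, hinj, hg⟩ := h i (mem_Icc.1 hi).1 (mem_Icc.1 hi).2
      refine ⟨g, fun _ => ⟨by simpa using hinj, fun j hj => ?_, fun j hj => ?_⟩⟩
      · obtain ⟨hj1, hjv⟩ := mem_Icc.1 hj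
        exact mem_Icc.2 ⟨(hg j hj1 hjv).1, (hg j hj1 hjv).2.1⟩
      · obtain ⟨hj1, hjv⟩ := mem_Icc.1 hj
        exact Int.ofNat_le.2 (hg j hj1 hjv).2.2
    · exact ⟨id, fun h' => absurd h' hi⟩
  choose f hf using this
  exact ⟨f, hf⟩

def unmatched (v : ℕ → ℕ) (f : ℕ → ℕ → ℕ) (q : ℕ) : Finset ℕ :=
  Icc 1 (v (q + 1)) \ (Icc 1 (v q)).image (f q)

def excess (v : ℕ → ℕ) (d : ℕ → ℕ → ℕ) (f : ℕ → ℕ → ℕ) (q : ℕ) : ℤ :=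
  alignExcess (Icc 1 (v q)) (row d q) (row d (q + 1)) (f q)

def unmatchedSum (v : ℕ → ℕ) (d : ℕ → ℕ → ℕ) (f : ℕ → ℕ → ℕ) (q : ℕ) : ℤ :=
  sumBb (Icc 1 (v q)) (unmatched v f q) (row d q) (row d (q + 1))

lemma IsAlignment.card_unmatched (hf : IsAlignment n v d f) {q : ℕ} (hq : q ∈ Icc 1 n) :
    (unmatched v f q).card = v (q + 1) - v q := by
  rw [unmatched, card_sdiff_image (hf q hq).injOn (hf q hq).mapsTo, Nat.card_Icc, Nat.card_Icc]
  omega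

lemma IsAlignment.degD_eq (hf : IsAlignment n v d f) :
    degD n v d = -∑ q ∈ Icc 1 n, (excess v d f q + unmatchedSum v d f q) := by
  rw [← sum_neg_distrib]
  exact sum_congr rfl fun q hq => sumBb_self_sub_sumBb (hf q hq).injOn (hf q hq).mapsTo

lemma IsAlignment.sum_row_le_sum_excess (hf : IsAlignment n v d f)
    (hdtop : ∀ r, d (n + 1) r = 0) {p : ℕ} (hp : 1 ≤ p) (hpn : p ≤ n + 1) {S : Finset ℕ}
    (hS : S ⊆ Icc 1 (v p)) : ∑ k ∈ S, row d p k ≤ ∑ q ∈ Icc p n, excess v d f q := by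
  induction hpn using Nat.decreasingInduction generalizing S with
  | self => simp [row, hdtop]
  | of_succ p hpn ih =>
    have hfp := hf p (mem_Icc.2 ⟨hp, by omega⟩)
    have hinjS : Set.InjOn (f p) S := hfp.injOn.mono (coe_subset.2 hS)
    have himage : S.image (f p) ⊆ Icc 1 (v (p + 1)) :=
      image_subset_iff.2 fun _ hk => hfp.mapsTo (hS hk)
    calc ∑ k ∈ S, row d p k
        = ∑ k ∈ S, (row d p k - row d (p + 1) (f p k)) + ∑ r ∈ S.image (f p), row d (p + 1) r := by
          rw [sum_image hinjS, ← sum_add_distrib]; simp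
      _ ≤ excess v d f p + ∑ q ∈ Icc (p + 1) n, excess v d f q :=
          add_le_add (hfp.sum_sub_le_alignExcess hS) (ih (by omega) himage)
      _ = ∑ q ∈ Icc p n, excess v d f q := by
          rw [← insert_Icc_add_one_left_eq_Icc (by omega : p ≤ n), sum_insert (by simp)]

lemma exists_top_nonzero_level (hdtop : ∀ r, d (n + 1) r = 0)
    (hne : ∃ i j, 1 ≤ i ∧ i ≤ n ∧ 1 ≤ j ∧ j ≤ v i ∧ d i j ≠ 0) :
    ∃ p ∈ Icc 1 n, ∃ a ∈ Icc 1 (v p), d p a ≠ 0 ∧ ∀ r ∈ Icc 1 (v (p + 1)), d (p + 1) r = 0 := by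
  classical
  let P : ℕ → Prop := fun q => ∃ a ∈ Icc 1 (v q), d q a ≠ 0
  obtain ⟨i, j, hi1, hin, hj1, hjv, hij⟩ := hne
  have hPi : P i := ⟨j, mem_Icc.2 ⟨hj1, hjv⟩, hij⟩
  set p := Nat.findGreatest P n
  obtain ⟨a, ha, hpa⟩ := Nat.findGreatest_spec (P := P) hin hPi
  refine ⟨p, mem_Icc.2 ⟨hi1.trans (Nat.le_findGreatest hin hPi), Nat.findGreatest_le n⟩,
    a, ha, hpa, fun r hr => ?_⟩
  rcases (Nat.findGreatest_le (P := P) n).lt_or_eq with hlt | heq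
  · by_contra hr0
    exact Nat.findGreatest_is_greatest (Nat.lt_succ_self _) hlt ⟨r, hr, hr0⟩
  · rw [show p = n from heq]; exact hdtop r

lemma IsAlignment.excess_pos_and_unmatchedSum_pos (hf : IsAlignment n v d f)
    (hvmono : ∀ i, 1 ≤ i → i ≤ n → v i < v (i + 1)) {p a : ℕ} (hp : p ∈ Icc 1 n)
    (ha : a ∈ Icc 1 (v p)) (hpa : d p a ≠ 0) (htop : ∀ r ∈ Icc 1 (v (p + 1)), d (p + 1) r = 0) :
    0 < excess v d f p ∧ 0 < unmatchedSum v d f p := by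
  have hrow : 0 < row d p a := by simp [row]; omega
  have hpair := (hf p hp).sum_sub_le_alignExcess (singleton_subset_iff.2 ha)
  obtain ⟨r, hr⟩ : (unmatched v f p).Nonempty := by
    rw [← card_pos, hf.card_unmatched hp]
    have := hvmono p (mem_Icc.1 hp).1 (mem_Icc.1 hp).2
    omega
  have hgap := sum_sub_le_sumBb (x := row d p) (y := row d (p + 1)) ha (singleton_subset_iff.2 hr)
  have hr0 : row d (p + 1) r = 0 := by simp [row, htop r (mem_sdiff.1 hr).1]
  have hfa0 : row d (p + 1) (f p a) = 0 := by simp [row, htop _ ((hf p hp).mapsTo ha)]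
  simp only [sum_singleton, hr0, hfa0] at hpair hgap
  exact ⟨by unfold excess; linarith, by unfold unmatchedSum; linarith⟩

lemma IsAlignment.sum_row_add_mul_le (hf : IsAlignment n v d f) (hdtop : ∀ r, d (n + 1) r = 0)
    {i j : ℕ} (hi : i ∈ Icc 1 n) (hj : j ∈ Icc 1 (v i)) {S : Finset ℕ}
    (hS : S ⊆ Icc 1 (v (i + 1))) :
    ∑ k ∈ S, row d (i + 1) k + ((v (i + 1) - v i - S.card : ℕ) : ℤ) * row d i j
      ≤ ∑ q ∈ Icc (i + 1) n, excess v d f q + unmatchedSum v d f i := by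
  obtain ⟨U, hU, hdisj, hUcard⟩ := exists_subset_disjoint_card_eq S (unmatched v f i)
  have hUsub : U ⊆ Icc 1 (v (i + 1)) := hU.trans sdiff_subset
  have hchain := hf.sum_row_le_sum_excess hdtop (by omega) (Nat.succ_le_succ (mem_Icc.1 hi).2)
    (union_subset hS hUsub)
  have hgap := sum_sub_le_sumBb (x := row d i) (y := row d (i + 1)) hj hU
  rw [sum_union hdisj] at hchain
  rw [sum_sub_distrib, sum_const, hUcard, hf.card_unmatched hi, nsmul_eq_mul] at hgap
  unfold unmatchedSum
  linarith

end Flag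

theorem degD_lt_F_bound_general (n : ℕ) (v : ℕ → ℕ) (d : ℕ → ℕ → ℕ)
    (hvmono : ∀ i, 1 ≤ i → i ≤ n → v i < v (i + 1))
    (hdtop : ∀ r, d (n + 1) r = 0)
    (halign : Aligned n v d)
    (hne : ∃ i j, 1 ≤ i ∧ i ≤ n ∧ 1 ≤ j ∧ j ≤ v i ∧ d i j ≠ 0) :
    ∀ i, 1 ≤ i → i ≤ n → ∀ ℓ : ℕ, ℓ ≤ v (i + 1) - v i → ∀ j, 1 ≤ j → j ≤ v i →
      ∀ F : ℤ,
        IsGreatest {x : ℤ | ∃ S : Finset ℕ, S ⊆ Icc 1 (v (i + 1)) ∧ S.card = ℓ ∧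
          x = ∑ k ∈ S, (d (i + 1) k : ℤ)} F →
        degD n v d < -F + ((v i : ℤ) - (v (i + 1) : ℤ) + (ℓ : ℤ)) * (d i j : ℤ) := by
  intro i hi1 hin ℓ hℓ j hj1 hjv F hF
  have hi : i ∈ Icc 1 n := mem_Icc.2 ⟨hi1, hin⟩
  obtain ⟨f, hf⟩ := halign.exists_isAlignment
  obtain ⟨S, hS, rfl, rfl⟩ := hF.1
  obtain ⟨p, hp, a, ha, hpa, htop⟩ := exists_top_nonzero_level hdtop hne
  have hbound := hf.sum_row_add_mul_le hdtop hi (mem_Icc.2 ⟨hj1, hjv⟩) hS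
  have hslack := hf.excess_pos_and_unmatchedSum_pos hvmono hp ha hpa htop
  have hstrict := sum_add_lt_sum_add_sum (E := excess v d f) (T := unmatchedSum v d f)
    (Icc_subset_Icc_left (by omega : 1 ≤ i + 1)) hi
    (by simp) hp (fun q hq => (hf q hq).alignExcess_nonneg) (fun _ _ => sumBb_nonneg)
    hslack.1 hslack.2
  have hvi := hvmono i hi1 hin
  rw [hf.degD_eq, sum_add_distrib]
  push_cast [row, Nat.cast_sub hℓ, Nat.cast_sub hvi.le] at hbound ⊢
  linarith

/-- Second degree-bound lemma: for an aligned, not identically zero degree vector `d`,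
for every `1 ≤ i ≤ n`, `0 ≤ ℓ ≤ v_{i+1} − v_i`, and `1 ≤ j ≤ v_i`,
`D(d) < − F_ℓ(d^{i+1}) + (v_i − v_{i+1} + ℓ) · d^i_j`, where `F_ℓ(d^{i+1})` is the
maximum of `Σ_{k∈S} d^{i+1}_k` over subsets `S ⊆ {1,…,v_{i+1}}` of cardinality `ℓ`. -/
theorem degD_lt_F_bound (n : ℕ) (hn : 1 ≤ n) (v : ℕ → ℕ) (d : ℕ → ℕ → ℕ)
    (hv1 : 0 < v 1) (hvmono : ∀ i, 1 ≤ i → i ≤ n → v i < v (i + 1))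
    (hdtop : ∀ r, d (n + 1) r = 0)
    (halign : Aligned n v d)
    (hne : ∃ i j, 1 ≤ i ∧ i ≤ n ∧ 1 ≤ j ∧ j ≤ v i ∧ d i j ≠ 0) :
    ∀ i, 1 ≤ i → i ≤ n → ∀ ℓ : ℕ, ℓ ≤ v (i + 1) - v i → ∀ j, 1 ≤ j → j ≤ v i →
      ∀ F : ℤ,
        IsGreatest {x : ℤ | ∃ S : Finset ℕ, S ⊆ Icc 1 (v (i + 1)) ∧ S.card = ℓ ∧
          x = ∑ k ∈ S, (d (i + 1) k : ℤ)} F →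
        degD n v d < -F + ((v i : ℤ) - (v (i + 1) : ℤ) + (ℓ : ℤ)) * (d i j : ℤ) :=
  degD_lt_F_bound_general n v d hvmono hdtop halign hne
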